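/- arXiv:1108.1167 — 2 statements merged into one kernel-verified Lean document; each statement's English description precedes it below -/
import Mathlib

section
/- Let μ > 0, σ > 0, γ ∈ (0,1) with 0 < μ/(γσ²) < 1, ε ∈ (0,1), and λ ∈ (0, μ) with μ + λ < γσ². Set a = √( (1/2 − μ/σ²)² − (γ−1)(μ²−λ²)/(γσ⁴) ), b = 1/2 − μ/σ² + (γ−1)(μ−λ)/(γσ²), assume a > 0 and |b| < a, and let w(y) = ( a·tanh( artanh(b/a) − a·y ) + (μ/σ² − 1/2) ) / (γ−1). Set l = (μ−λ)/(γσ² − (μ−λ)), u = (1/(1−ε))·(μ+λ)/(γσ² − (μ+λ)), L = log(u/l), and assume L > 0 and that the terminal condition w(L) = (μ+λ)/(γσ²) holds. Then ∫₀^L w(y) dy = ( (μ/σ² − 1/2)/(γ−1) )·log( (1/(1−ε))·( (μ+λ)(γσ² − μ + λ) ) / ( (μ−λ)(γσ² − μ − λ) ) ) + ( 1/(2(γ−1)) )·log( ( (μ+λ)(γσ² − μ − λ) ) / ( (μ−λ)(γσ² − μ + λ) ) ). -/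
/-!
On `[0, L]` the solution is `w y = (a tanh (c - a y) + m) / (γ - 1)` with `c = artanh (b / a)` and
`m = μ/σ² - 1/2`, so it integrates to `(m y - log cosh (c - a y)) / (γ - 1)`, and
`log cosh = -½ log (1 - tanh²)`. The values of `a tanh` at the two ends are fixed by
`w 0 = (μ - λ)/(γσ²)` and the terminal condition `w L = (μ + λ)/(γσ²)`: both are
`b_ν = 1/2 - μ/σ² + (γ - 1) ν/(γσ²)` with `ν = μ ∓ λ`, and `a² - b_ν²` factors as
`(1 - γ) ν (γσ² - ν)/(γσ²)²` because `ν (2μ - ν) = μ² - λ²`. The `m L` term gives the first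
logarithm since `L = log (u / l)`.
-/

/-- Real inverse hyperbolic tangent on (-1,1). -/
noncomputable def artanh (x : ℝ) : ℝ := (1 / 2) * Real.log ((1 + x) / (1 - x))

namespace Real

theorem continuous_tanh : Continuous tanh := by
  rw [show tanh = fun x => sinh x / cosh x from funext tanh_eq_sinh_div_cosh]
  exact continuous_sinh.div continuous_cosh fun x => (cosh_pos x).ne'

theorem hasDerivAt_log_cosh (x : ℝ) : HasDerivAt (fun y => log (cosh y)) (tanh x) x := by
  simpa [tanh_eq_sinh_div_cosh] using (hasDerivAt_cosh x).log (cosh_pos x).ne'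

theorem integral_tanh (s t : ℝ) : ∫ x in s..t, tanh x = log (cosh t) - log (cosh s) :=
  intervalIntegral.integral_eq_sub_of_hasDerivAt (fun x _ => hasDerivAt_log_cosh x)
    (continuous_tanh.intervalIntegrable s t)

theorem one_sub_tanh_sq (x : ℝ) : 1 - tanh x ^ 2 = (cosh x ^ 2)⁻¹ := by
  have := (cosh_pos x).ne'
  rw [tanh_eq_sinh_div_cosh]
  field_simp
  linarith [cosh_sq_sub_sinh_sq x]

theorem log_cosh_eq (x : ℝ) : log (cosh x) = -(1 / 2) * log (1 - tanh x ^ 2) := by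
  rw [one_sub_tanh_sq, log_inv, log_pow]
  push_cast
  ring

end Real

theorem integral_tanh_sub_mul {a : ℝ} (ha : a ≠ 0) (c L : ℝ) :
    ∫ y in (0 : ℝ)..L, Real.tanh (c - a * y)
      = Real.log ((1 - Real.tanh (c - a * L) ^ 2) / (1 - Real.tanh c ^ 2)) / (2 * a) := by
  have hpos (x : ℝ) : 1 - Real.tanh x ^ 2 ≠ 0 := (sub_pos.mpr (Real.tanh_sq_lt_one x)).ne'
  rw [intervalIntegral.integral_comp_sub_mul _ ha, Real.integral_tanh, Real.log_cosh_eq,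
    Real.log_cosh_eq, Real.log_div (hpos _) (hpos _), mul_zero, sub_zero, smul_eq_mul]
  field_simp
  ring

theorem integral_affine_tanh_sub_mul_div {a : ℝ} (ha : a ≠ 0) (c m k L : ℝ) :
    ∫ y in (0 : ℝ)..L, (a * Real.tanh (c - a * y) + m) / k
      = (m * L + Real.log ((1 - Real.tanh (c - a * L) ^ 2) / (1 - Real.tanh c ^ 2)) / 2) / k := by
  have hint : IntervalIntegrable (fun y => a * Real.tanh (c - a * y)) MeasureTheory.volume 0 L :=
    (continuous_const.mul (Real.continuous_tanh.comp (by fun_prop))).intervalIntegrable _ _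
  rw [intervalIntegral.integral_div, intervalIntegral.integral_add hint intervalIntegrable_const,
    intervalIntegral.integral_const_mul, integral_tanh_sub_mul ha, intervalIntegral.integral_const,
    smul_eq_mul]
  field_simp
  ring

theorem tanh_artanh {x : ℝ} (hx : |x| < 1) : Real.tanh (artanh x) = x := by
  have hx' : x ∈ Set.Ioo (-1) 1 := abs_lt.mp hx
  rw [artanh, ← Real.artanh_eq_half_log (Set.Ioo_subset_Icc_self hx'), Real.tanh_artanh hx']

theorem riccati_discriminant_sub_sq {μ σ γ lam ν : ℝ} (hσ : σ ≠ 0) (hγ : γ ≠ 0)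
    (hν : (ν - μ) ^ 2 = lam ^ 2) :
    (1 / 2 - μ / σ ^ 2) ^ 2 - (γ - 1) * (μ ^ 2 - lam ^ 2) / (γ * σ ^ 4)
        - (1 / 2 - μ / σ ^ 2 + (γ - 1) * ν / (γ * σ ^ 2)) ^ 2
      = (1 - γ) * ν * (γ * σ ^ 2 - ν) / (γ * σ ^ 2) ^ 2 := by
  rw [← sub_eq_zero, ← hν]
  field_simp
  ring

theorem riccati_boundary_ratio {μ σ γ lam a : ℝ} (hσ : σ ≠ 0) (hγ₀ : γ ≠ 0) (hγ₁ : γ ≠ 1)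
    (ha : a ≠ 0)
    (ha2 : a ^ 2 = (1 / 2 - μ / σ ^ 2) ^ 2 - (γ - 1) * (μ ^ 2 - lam ^ 2) / (γ * σ ^ 4)) :
    (1 - ((1 / 2 - μ / σ ^ 2 + (γ - 1) * (μ + lam) / (γ * σ ^ 2)) / a) ^ 2)
        / (1 - ((1 / 2 - μ / σ ^ 2 + (γ - 1) * (μ - lam) / (γ * σ ^ 2)) / a) ^ 2)
      = ((μ + lam) * (γ * σ ^ 2 - μ - lam)) / ((μ - lam) * (γ * σ ^ 2 - μ + lam)) := by
  have hsq (x : ℝ) : 1 - (x / a) ^ 2 = (a ^ 2 - x ^ 2) / a ^ 2 := by field_simp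
  rw [hsq, hsq, div_div_div_cancel_right₀ (pow_ne_zero 2 ha), ha2,
    riccati_discriminant_sub_sq (ν := μ + lam) hσ hγ₀ (by ring),
    riccati_discriminant_sub_sq (ν := μ - lam) hσ hγ₀ (by ring),
    div_div_div_cancel_right₀ (pow_ne_zero 2 (by positivity)), mul_assoc, mul_assoc,
    mul_div_mul_left _ _ (sub_ne_zero.mpr hγ₁.symm)]
  congr 1 <;> ring

theorem integral_of_riccati_solution_general
    (μ σ γ ε lam : ℝ) (hσ : 0 < σ)
    (hγ : γ ∈ Set.Ioo (0 : ℝ) 1)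
    (a b : ℝ)
    (ha : a = Real.sqrt
      ((1 / 2 - μ / σ ^ 2) ^ 2 - (γ - 1) * (μ ^ 2 - lam ^ 2) / (γ * σ ^ 4)))
    (hb : b = 1 / 2 - μ / σ ^ 2 + (γ - 1) * (μ - lam) / (γ * σ ^ 2))
    (hapos : 0 < a) (hba : |b| < a)
    (w : ℝ → ℝ)
    (hw : w = fun y : ℝ =>
      (a * Real.tanh (artanh (b / a) - a * y) + (μ / σ ^ 2 - 1 / 2)) / (γ - 1))
    (l u L : ℝ)
    (hl : l = (μ - lam) / (γ * σ ^ 2 - (μ - lam)))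
    (hu : u = (1 / (1 - ε)) * ((μ + lam) / (γ * σ ^ 2 - (μ + lam))))
    (hL : L = Real.log (u / l))
    (hterm : w L = (μ + lam) / (γ * σ ^ 2)) :
    ∫ y in (0 : ℝ)..L, w y
      = ((μ / σ ^ 2 - 1 / 2) / (γ - 1))
          * Real.log ((1 / (1 - ε))
            * ((μ + lam) * (γ * σ ^ 2 - μ + lam))
            / ((μ - lam) * (γ * σ ^ 2 - μ - lam)))
        + (1 / (2 * (γ - 1)))
          * Real.log (((μ + lam) * (γ * σ ^ 2 - μ - lam))
            / ((μ - lam) * (γ * σ ^ 2 - μ + lam))) := by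
  have hγ1 : γ - 1 ≠ 0 := (sub_neg.mpr hγ.2).ne
  have ha0 : a ≠ 0 := hapos.ne'
  have ha2 : a ^ 2 = (1 / 2 - μ / σ ^ 2) ^ 2 - (γ - 1) * (μ ^ 2 - lam ^ 2) / (γ * σ ^ 4) :=
    ha ▸ Real.sq_sqrt (Real.sqrt_pos.mp (ha ▸ hapos)).le
  have hratio := riccati_boundary_ratio hσ.ne' hγ.1.ne' hγ.2.ne ha0 ha2
  rw [← hb] at hratio
  have htc : Real.tanh (artanh (b / a)) = b / a := by
    refine tanh_artanh ?_
    rwa [abs_div, abs_of_pos hapos, div_lt_one hapos]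
  have htL : Real.tanh (artanh (b / a) - a * L)
      = (1 / 2 - μ / σ ^ 2 + (γ - 1) * (μ + lam) / (γ * σ ^ 2)) / a := by
    rw [hw] at hterm
    rw [eq_div_iff ha0]
    field_simp at hterm ⊢
    linarith
  have hlogL : Real.log ((1 / (1 - ε)) * ((μ + lam) * (γ * σ ^ 2 - μ + lam))
      / ((μ - lam) * (γ * σ ^ 2 - μ - lam))) = L := by
    rw [hL, hu, hl]
    congr 1
    simp only [div_eq_mul_inv, mul_inv, inv_inv]
    ring
  rw [hw, integral_affine_tanh_sub_mul_div ha0, htL, htc, hratio, hlogL]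
  field_simp

/-- Closed form of the integral of the explicit
hyperbolic-tangent Riccati solution `w` over the no-trade region `[0, L]`,
`L = log(u/l)`, under the terminal gap condition `w(L) = (μ+λ)/(γσ²)`. -/
theorem integral_of_riccati_solution
    (μ σ γ ε lam : ℝ) (hμ : 0 < μ) (hσ : 0 < σ)
    (hγ : γ ∈ Set.Ioo (0 : ℝ) 1)
    (hmerton : 0 < μ / (γ * σ ^ 2) ∧ μ / (γ * σ ^ 2) < 1)
    (hε : ε ∈ Set.Ioo (0 : ℝ) 1) (hlam : lam ∈ Set.Ioo 0 μ)
    (hlev : μ + lam < γ * σ ^ 2)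
    (a b : ℝ)
    (ha : a = Real.sqrt
      ((1 / 2 - μ / σ ^ 2) ^ 2 - (γ - 1) * (μ ^ 2 - lam ^ 2) / (γ * σ ^ 4)))
    (hb : b = 1 / 2 - μ / σ ^ 2 + (γ - 1) * (μ - lam) / (γ * σ ^ 2))
    (hapos : 0 < a) (hba : |b| < a)
    (w : ℝ → ℝ)
    (hw : w = fun y : ℝ =>
      (a * Real.tanh (artanh (b / a) - a * y) + (μ / σ ^ 2 - 1 / 2)) / (γ - 1))
    (l u L : ℝ)
    (hl : l = (μ - lam) / (γ * σ ^ 2 - (μ - lam)))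
    (hu : u = (1 / (1 - ε)) * ((μ + lam) / (γ * σ ^ 2 - (μ + lam))))
    (hL : L = Real.log (u / l)) (hLpos : 0 < L)
    (hterm : w L = (μ + lam) / (γ * σ ^ 2)) :
    ∫ y in (0 : ℝ)..L, w y
      = ((μ / σ ^ 2 - 1 / 2) / (γ - 1))
          * Real.log ((1 / (1 - ε))
            * ((μ + lam) * (γ * σ ^ 2 - μ + lam))
            / ((μ - lam) * (γ * σ ^ 2 - μ - lam)))
        + (1 / (2 * (γ - 1)))
          * Real.log (((μ + lam) * (γ * σ ^ 2 - μ - lam))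
            / ((μ - lam) * (γ * σ ^ 2 - μ + lam))) :=
  integral_of_riccati_solution_general μ σ γ ε lam hσ hγ a b ha hb hapos hba w hw l u L hl hu hL
    hterm
end

section
/- Let μ > 0, σ > 0 with μ ≠ σ²/2, γ > 0 with 0 < μ/(γσ²) < 1, write π* = μ/(γσ²), and let ε₀ > 0 and λ : (0, ε₀) → (0, μ) satisfy μ + λ(ε) < γσ² for all ε and λ(ε) = γσ²·( (3/(4γ))·π*²·(1−π*)² )^{1/3}·ε^{1/3} + O(ε) as ε ↓ 0. Define π₋(ε) = (μ−λ(ε))/(γσ²), π₊(ε) = (μ+λ(ε))/(γσ²), R(ε) = (1/(1−ε))·( (μ+λ(ε))·(γσ² − μ + λ(ε)) ) / ( (μ−λ(ε))·(γσ² − μ − λ(ε)) ), and the average wealth turnover WeT(ε) = (σ²/2)·(2μ/σ² − 1)·( π₋(ε)(1−π₋(ε))/(R(ε)^{2μ/σ² − 1} − 1) − π₊(ε)(1−π₊(ε))/(R(ε)^{1 − 2μ/σ²} − 1) ). Then WeT(ε) = (2γσ²/3)·( (3/(4γ))·π*²·(1−π*)² )^{2/3}·ε^{−1/3} + O(ε^{1/3})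 as ε ↓ 0. -/
/-!
Write `δ = λ/(γσ²)` and `w = ε^{1/3}`, so that `δ = a·w + O(w³)` with
`a = ((3/(4γ))·π*²·(1-π*)²)^{1/3}`. The width ratio is `R = (1/(1-ε))·(1+x)/(1-x)` with
`x = δ/(π*(1-π*) + δ²)`, and `log((1+x)/(1-x)) = 2x + O(x³)` is odd, so the second-order terms
cancel and `log R = (2a/(π*(1-π*)))·w + O(w³)`. With `u = (2μ/σ² - 1)·log R` the turnover is a
combination of `1/(eᵘ - 1)` and `1/(e⁻ᵘ - 1)`, and the expansion `1/(eᵘ - 1) = 1/u - 1/2 + O(u)`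
turns the `O(w³)` error in `u` into an `O(w)` error around the leading term, of order `1/w`.
-/

open Asymptotics

open Filter Topology Real

theorem abs_log_one_add_div_one_sub_sub_le {x : ℝ} (hx : |x| ≤ 1 / 2) :
    |log ((1 + x) / (1 - x)) - 2 * x| ≤ 4 * |x| ^ 3 := by
  have hx1 : |x| < 1 := by linarith
  obtain ⟨hlo, hhi⟩ := abs_lt.mp hx1
  have hplus := abs_log_sub_add_sum_range_le (x := -x) (by rwa [abs_neg]) 2
  have hminus := abs_log_sub_add_sum_range_le hx1 2
  norm_num [Finset.sum_range_succ] at hplus hminus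
  have hcube : |x| ^ 3 / (1 - |x|) ≤ 2 * |x| ^ 3 := by
    rw [div_le_iff₀ (by linarith)]
    nlinarith [pow_nonneg (abs_nonneg x) 3]
  rw [log_div (by linarith) (by linarith)]
  calc |log (1 + x) - log (1 - x) - 2 * x|
      = |(-x + x ^ 2 / 2 + log (1 + x)) - (x + x ^ 2 / 2 + log (1 - x))| := by congr 1; ring
    _ ≤ |-x + x ^ 2 / 2 + log (1 + x)| + |x + x ^ 2 / 2 + log (1 - x)| := abs_sub _ _
    _ ≤ 4 * |x| ^ 3 := by linarith

theorem isBigO_log_one_add_div_one_sub_sub :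
    (fun x : ℝ => log ((1 + x) / (1 - x)) - 2 * x) =O[𝓝 0] fun x => x ^ 3 := by
  refine IsBigO.of_bound 4 ?_
  filter_upwards [Metric.closedBall_mem_nhds (0 : ℝ) (by norm_num : (0 : ℝ) < 1 / 2)] with x hx
  rw [Metric.mem_closedBall, dist_zero_right, norm_eq_abs] at hx
  simpa only [norm_eq_abs, abs_pow] using abs_log_one_add_div_one_sub_sub_le hx

theorem isBigO_log_mul_div_mul_sub {π₀ : ℝ} (hπ₀0 : 0 < π₀) (hπ₀1 : π₀ < 1) :
    (fun d : ℝ => log ((π₀ + d) * (1 - π₀ + d) / ((π₀ - d) * (1 - π₀ - d)))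
      - 2 * d / (π₀ * (1 - π₀))) =O[𝓝 0] fun d => d ^ 3 := by
  set X := π₀ * (1 - π₀)
  have hX : 0 < X := mul_pos hπ₀0 (by linarith)
  have hden : ∀ d : ℝ, X + d ^ 2 ≠ 0 := fun d => by positivity
  have hx : (fun d : ℝ => d / (X + d ^ 2)) =O[𝓝 0] id := by
    refine IsBigO.of_bound X⁻¹ (Eventually.of_forall fun d => ?_)
    rw [norm_div, norm_of_nonneg (by positivity : 0 ≤ X + d ^ 2), ← div_eq_inv_mul]
    exact div_le_div_of_nonneg_left (norm_nonneg _) hX (le_add_of_nonneg_right (sq_nonneg d))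
  have hlog := (isBigO_log_one_add_div_one_sub_sub.comp_tendsto
    (hx.trans_tendsto tendsto_id)).trans (hx.pow 3)
  have hinv : Tendsto (fun d : ℝ => (X + d ^ 2)⁻¹) (𝓝 0) (𝓝 X⁻¹) := by
    simpa using ((continuous_const.add (continuous_pow 2)).tendsto (0 : ℝ)).inv₀
      (by simpa using hX.ne')
  have hcorr : (fun d : ℝ => 2 * (d / (X + d ^ 2)) - 2 * d / X) =O[𝓝 0] fun d => d ^ 3 :=
    (((isBigO_refl (fun d : ℝ => d ^ 3) _).mul (hinv.isBigO_one ℝ)).const_mul_left (-2 / X)).congr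
      (fun d => by field_simp [hden d]; ring) fun d => mul_one _
  refine (hlog.add hcorr).congr_left fun d => ?_
  have hratio : (1 + d / (X + d ^ 2)) / (1 - d / (X + d ^ 2))
      = (π₀ + d) * (1 - π₀ + d) / ((π₀ - d) * (1 - π₀ - d)) := by
    rw [one_add_div (hden d), one_sub_div (hden d), div_div_div_cancel_right₀ (hden d)]
    congr 1 <;> ring
  simp only [Function.comp, hratio]
  ring

theorem isEquivalent_exp_sub_one : (fun u : ℝ => exp u - 1) ~[𝓝 0] id :=
  ((exp_sub_sum_range_isBigO_pow 2).trans_isLittleO (isLittleO_pow_id one_lt_two)).congr_left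
    fun u => by norm_num [Finset.sum_range_succ, sub_sub]

theorem isBigO_inv_exp_sub_one_sub_inv :
    (fun u : ℝ => (exp u - 1)⁻¹ - u⁻¹ + 1 / 2) =O[𝓝[≠] 0] id := by
  have hlin : (fun u => exp u - 1 - u) =O[𝓝 0] (· ^ 2) :=
    (exp_sub_sum_range_isBigO_pow 2).congr_left fun u => by norm_num [Finset.sum_range_succ, sub_sub]
  have hquad : (fun u => exp u - 1 - u - u ^ 2 / 2) =O[𝓝 0] (· ^ 3) :=
    (exp_sub_sum_range_isBigO_pow 3).congr_left fun u => by
      norm_num [Finset.sum_range_succ, sub_sub]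
  -- `(eᵘ - 1)⁻¹ - u⁻¹ + 1/2` is this numerator over `u (eᵘ - 1) ~ u²`
  have hnum : (fun u => u / 2 * (exp u - 1 - u) - (exp u - 1 - u - u ^ 2 / 2)) =O[𝓝 0] (· ^ 3) :=
    ((((isBigO_refl id _).const_mul_left (1 / 2)).mul hlin).congr (fun u => by simp only [id]; ring)
      fun u => by simp only [id]; ring).sub hquad
  have hden : (fun u => (u * (exp u - 1))⁻¹) =O[𝓝[≠] 0] fun u => (u ^ 2)⁻¹ :=
    ((IsEquivalent.refl.mul isEquivalent_exp_sub_one).mono nhdsWithin_le_nhds).inv.isBigO.congr_right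
      fun u => by simp [sq]
  refine ((hnum.mono nhdsWithin_le_nhds).mul hden).congr' ?_ ?_
  · filter_upwards [self_mem_nhdsWithin] with u (hu : u ≠ 0)
    have he : exp u - 1 ≠ 0 := sub_ne_zero.mpr (by rwa [Ne, exp_eq_one_iff])
    field_simp
    ring
  · filter_upwards [self_mem_nhdsWithin] with u (hu : u ≠ 0)
    simp only [id_eq]
    field_simp

theorem Asymptotics.IsEquivalent.tendsto_nhdsNE {α β : Type*} [NormedAddCommGroup β]
    {l : Filter α} {u v : α → β} (huv : u ~[l] v) (hv : Tendsto v l (𝓝[≠] 0)) :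
    Tendsto u l (𝓝[≠] 0) := by
  rw [tendsto_nhdsWithin_iff] at hv ⊢
  exact ⟨huv.symm.tendsto_nhds hv.1,
    (huv.isBigO_symm.eq_zero_imp.and hv.2).mono fun _ h hu => h.2 (h.1 hu)⟩

theorem isBigO_inv_const_mul {α : Type*} {l : Filter α} (q : ℝ) (w : α → ℝ) :
    (fun t => (q * w t)⁻¹) =O[l] fun t => (w t)⁻¹ :=
  (isBigO_const_mul_self q⁻¹ _ l).congr_left fun t => by rw [mul_inv]

section

variable {α : Type*} {l : Filter α} {w : α → ℝ}

theorem isBigO_of_sub_const_mul_isBigO_pow_three {f : α → ℝ} {c : ℝ} (hw : Tendsto w l (𝓝 0))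
    (h : (fun t => f t - c * w t) =O[l] fun t => w t ^ 3) : f =O[l] w :=
  ((h.trans_isLittleO ((isLittleO_pow_id (by norm_num)).comp_tendsto hw)).isBigO.add
    ((isBigO_refl w l).const_mul_left c)).congr_left fun t => by ring

theorem isEquivalent_const_mul_of_sub_isBigO_pow_three {u : α → ℝ} {q : ℝ} (hq : q ≠ 0)
    (hw : Tendsto w l (𝓝 0)) (h : (fun t => u t - q * w t) =O[l] fun t => w t ^ 3) :
    u ~[l] fun t => q * w t :=
  h.trans_isLittleO
    (((isLittleO_pow_id (by norm_num)).comp_tendsto hw).trans_isBigO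
      ((isBigO_refl w l).const_mul_right hq))

theorem tendsto_const_mul_nhdsNE {q : ℝ} (hq : q ≠ 0) (hw : Tendsto w l (𝓝[≠] 0)) :
    Tendsto (fun t => q * w t) l (𝓝[≠] 0) := by
  rw [tendsto_nhdsWithin_iff] at hw ⊢
  exact ⟨by simpa using hw.1.const_mul q, hw.2.mono fun _ h => mul_ne_zero hq h⟩

theorem isBigO_inv_exp_sub_one_sub_inv_const_mul {u : α → ℝ} {q : ℝ} (hq : q ≠ 0)
    (hw : Tendsto w l (𝓝[≠] 0)) (hu : (fun t => u t - q * w t) =O[l] fun t => w t ^ 3) :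
    (fun t => (exp (u t) - 1)⁻¹ - (q * w t)⁻¹ + 1 / 2) =O[l] w := by
  have hequiv := isEquivalent_const_mul_of_sub_isBigO_pow_three hq
    (tendsto_nhds_of_tendsto_nhdsWithin hw) hu
  have hqw := tendsto_const_mul_nhdsNE hq hw
  have hut := hequiv.tendsto_nhdsNE hqw
  have hexp := (isBigO_inv_exp_sub_one_sub_inv.comp_tendsto hut).trans
    (hequiv.isBigO.trans (isBigO_const_mul_self q w l))
  have hdiff : (fun t => (u t)⁻¹ - (q * w t)⁻¹) =O[l] w := by
    refine ((hu.neg_left.mul (hequiv.inv.isBigO.trans (isBigO_inv_const_mul q w))).mul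
      (isBigO_inv_const_mul q w)).congr' ?_ ?_
    · filter_upwards [eventually_mem_of_tendsto_nhdsWithin hut,
        eventually_mem_of_tendsto_nhdsWithin hqw] with t (hu0 : u t ≠ 0) (hqw0 : q * w t ≠ 0)
      have := right_ne_zero_of_mul hqw0
      simp only [Pi.inv_apply]
      field_simp
      ring
    · filter_upwards [eventually_mem_of_tendsto_nhdsWithin hw] with t (h : w t ≠ 0)
      field_simp
  exact (hexp.add hdiff).congr_left fun t => by simp only [Function.comp]; ring

theorem isBigO_turnover_sub {π₀ q : ℝ} {δ u : α → ℝ} (hq : q ≠ 0) (hw : Tendsto w l (𝓝[≠] 0))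
    (hδ : δ =O[l] w) (hu : (fun t => u t - q * w t) =O[l] fun t => w t ^ 3) :
    (fun t => (π₀ - δ t) * (1 - (π₀ - δ t)) / (exp (u t) - 1)
      - (π₀ + δ t) * (1 - (π₀ + δ t)) / (exp (-u t) - 1) - 2 * (π₀ * (1 - π₀)) / (q * w t))
      =O[l] w := by
  have hw0 := tendsto_nhds_of_tendsto_nhdsWithin hw
  have hequiv := isEquivalent_const_mul_of_sub_isBigO_pow_three hq hw0 hu
  have hut := hequiv.tendsto_nhdsNE (tendsto_const_mul_nhdsNE hq hw)
  have hexp : (fun t => exp (u t) - 1) ~[l] fun t => q * w t :=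
    (isEquivalent_exp_sub_one.comp_tendsto (tendsto_nhds_of_tendsto_nhdsWithin hut)).trans hequiv
  have hwne : ∀ᶠ t in l, w t ≠ 0 := eventually_mem_of_tendsto_nhdsWithin hw
  have hδ2 : (fun t => δ t ^ 2) =O[l] w :=
    (hδ.mul ((hδ.trans_tendsto hw0).isBigO_one ℝ)).congr (fun t => (sq _).symm) fun t => mul_one _
  have hδ2inv : (fun t => δ t ^ 2 * (exp (u t) - 1)⁻¹) =O[l] w := by
    refine ((hδ.pow 2).mul (hexp.inv.isBigO.trans (isBigO_inv_const_mul q w))).congr' .rfl ?_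
    filter_upwards [hwne] with t ht
    field_simp
  -- Since `1/(e⁻ᵘ - 1) = -1 - 1/(eᵘ - 1)` and `(π₀ - δ)(1 - π₀ + δ) + (π₀ + δ)(1 - π₀ - δ)`
  -- is `2π₀(1 - π₀) - 2δ²`, only `1/(eᵘ - 1)` carries the singular term.
  refine ((((isBigO_inv_exp_sub_one_sub_inv_const_mul hq hw hu).const_mul_left
    (2 * (π₀ * (1 - π₀)))).sub (hδ2inv.const_mul_left 2)).sub
    ((hδ.const_mul_left (2 * π₀ - 1)).add hδ2)).congr' ?_ .rfl
  filter_upwards [eventually_mem_of_tendsto_nhdsWithin hut, hwne] with t (hut0 : u t ≠ 0) hwt0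
  have he : exp (u t) - 1 ≠ 0 := sub_ne_zero.mpr (by rwa [Ne, exp_eq_one_iff])
  have he' : 1 - exp (u t) ≠ 0 := sub_ne_zero.mpr (by rwa [ne_comm, Ne, exp_eq_one_iff])
  rw [exp_neg]
  field_simp
  ring

end

/-- `R(ε)` in terms of the Merton proportion `π₀` and the half-width `δ = λ/(γσ²)` of the
no-trade region, whose boundaries are `π₀ ∓ δ`. -/
noncomputable def widthRatio (π₀ ε δ : ℝ) : ℝ :=
  1 / (1 - ε) * ((π₀ + δ) * (1 - π₀ + δ)) / ((π₀ - δ) * (1 - π₀ - δ))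

section

variable {α : Type*} {l : Filter α} {π₀ : ℝ} {ε δ w : α → ℝ}

theorem tendsto_widthRatio (hπ₀0 : 0 < π₀) (hπ₀1 : π₀ < 1) (hε : Tendsto ε l (𝓝 0))
    (hδ : Tendsto δ l (𝓝 0)) : Tendsto (fun t => widthRatio π₀ (ε t) (δ t)) l (𝓝 1) := by
  have hX : π₀ * (1 - π₀) ≠ 0 := (mul_pos hπ₀0 (by linarith)).ne'
  have h1 : widthRatio π₀ 0 0 = 1 := by simp [widthRatio, div_self hX]
  rw [← h1]
  exact ((tendsto_const_nhds.div (tendsto_const_nhds.sub hε) (by norm_num)).mul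
    ((tendsto_const_nhds.add hδ).mul (tendsto_const_nhds.add hδ))).div
    ((tendsto_const_nhds.sub hδ).mul (tendsto_const_nhds.sub hδ)) (by simpa using hX)

theorem isBigO_log_widthRatio_sub {a : ℝ} (hπ₀0 : 0 < π₀) (hπ₀1 : π₀ < 1)
    (hw : Tendsto w l (𝓝 0)) (hδ : (fun t => δ t - a * w t) =O[l] fun t => w t ^ 3)
    (hε : ε =O[l] fun t => w t ^ 3) :
    (fun t => log (widthRatio π₀ (ε t) (δ t)) - 2 * a / (π₀ * (1 - π₀)) * w t)
      =O[l] fun t => w t ^ 3 := by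
  have hδw := isBigO_of_sub_const_mul_isBigO_pow_three hw hδ
  have hδ0 := hδw.trans_tendsto hw
  have hε0 := hε.trans_tendsto (by simpa using hw.pow 3)
  have hlog : (fun t => log (1 - ε t)) =O[l] ε := by
    simpa [Function.comp_def] using
      (((hasDerivAt_id (0 : ℝ)).const_sub 1).log (by simp)).isBigO_sub.comp_tendsto hε0
  have hratio := ((isBigO_log_mul_div_mul_sub hπ₀0 hπ₀1).comp_tendsto hδ0).trans (hδw.pow 3)
  refine (((hlog.trans hε).neg_left.add hratio).add
    (hδ.const_mul_left (2 / (π₀ * (1 - π₀))))).congr' ?_ .rfl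
  filter_upwards [(tendsto_widthRatio hπ₀0 hπ₀1 hε0 hδ0).eventually_ne one_ne_zero] with t ht
  rw [widthRatio, mul_div_assoc] at ht ⊢
  obtain ⟨h1, h2⟩ := mul_ne_zero_iff.mp ht
  rw [log_mul h1 h2, one_div, log_inv]
  simp only [Function.comp]
  ring

end

theorem tendsto_rpow_nhdsGT_zero_nhdsNE {r : ℝ} (hr : 0 < r) :
    Tendsto (fun x : ℝ => x ^ r) (𝓝[>] 0) (𝓝[≠] 0) := by
  refine tendsto_nhdsWithin_iff.mpr ⟨?_, ?_⟩
  · simpa [zero_rpow hr.ne'] using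
      ((continuous_rpow_const hr.le).tendsto 0).mono_left nhdsWithin_le_nhds
  · filter_upwards [self_mem_nhdsWithin] with x (hx : 0 < x)
    exact (rpow_pos_of_pos hx r).ne'

theorem widthRatio_div {s : ℝ} (hs : s ≠ 0) (m ε d : ℝ) :
    widthRatio (m / s) ε (d / s)
      = 1 / (1 - ε) * ((m + d) * (s - m + d)) / ((m - d) * (s - m - d)) := by
  simp only [widthRatio]
  field_simp

theorem isBigO_turnover_widthRatio_sub {π₀ a p : ℝ} {δ : ℝ → ℝ} (hπ₀0 : 0 < π₀) (hπ₀1 : π₀ < 1)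
    (ha : a ≠ 0) (hp : p ≠ 0)
    (hδ : (fun ε => δ ε - a * ε ^ ((1 : ℝ) / 3)) =O[𝓝[>] 0] fun ε => ε) :
    (fun ε => p * ((π₀ - δ ε) * (1 - (π₀ - δ ε)) / (widthRatio π₀ ε (δ ε) ^ p - 1)
        - (π₀ + δ ε) * (1 - (π₀ + δ ε)) / (widthRatio π₀ ε (δ ε) ^ (-p) - 1))
      - (π₀ * (1 - π₀)) ^ 2 / a * ε ^ (-(1 : ℝ) / 3)) =O[𝓝[>] 0] fun ε => ε ^ ((1 : ℝ) / 3) := by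
  have hX : 0 < π₀ * (1 - π₀) := mul_pos hπ₀0 (by linarith)
  set w : ℝ → ℝ := fun ε => ε ^ ((1 : ℝ) / 3)
  have hw : Tendsto w (𝓝[>] 0) (𝓝[≠] 0) := tendsto_rpow_nhdsGT_zero_nhdsNE (by norm_num)
  have hw0 := tendsto_nhds_of_tendsto_nhdsWithin hw
  have hcube : (fun ε : ℝ => ε) =ᶠ[𝓝[>] 0] fun ε => w ε ^ 3 := by
    filter_upwards [self_mem_nhdsWithin] with ε (hε : 0 < ε)
    rw [← rpow_natCast, ← rpow_mul hε.le]
    norm_num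
  have hδ' := hδ.trans hcube.isBigO
  have hδw := isBigO_of_sub_const_mul_isBigO_pow_three hw0 hδ'
  obtain ⟨q, hq⟩ : ∃ q, q = p * (2 * a / (π₀ * (1 - π₀))) := ⟨_, rfl⟩
  have hq0 : q ≠ 0 := by rw [hq]; exact mul_ne_zero hp (by positivity)
  have hu := ((isBigO_log_widthRatio_sub hπ₀0 hπ₀1 hw0 hδ' hcube.isBigO).const_mul_left p).congr_left
    (f₂ := fun ε => p * log (widthRatio π₀ ε (δ ε)) - q * w ε) fun ε => by rw [hq]; ring
  have hRpos : ∀ᶠ ε in 𝓝[>] 0, 0 < widthRatio π₀ ε (δ ε) :=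
    (tendsto_widthRatio hπ₀0 hπ₀1 (tendsto_id.mono_left nhdsWithin_le_nhds)
      (hδw.trans_tendsto hw0)).eventually (lt_mem_nhds one_pos)
  refine ((isBigO_turnover_sub (π₀ := π₀) hq0 hw hδw hu).const_mul_left p).congr' ?_ .rfl
  filter_upwards [hRpos, self_mem_nhdsWithin] with ε hR (hε : 0 < ε)
  rw [rpow_def_of_pos hR, rpow_def_of_pos hR, mul_neg, mul_comm (log _) p, neg_div,
    rpow_neg hε.le, hq]
  simp only [w]
  field_simp

theorem wealth_turnover_asymptotics_general
    (μ σ γ : ℝ) (hσ : 0 < σ) (hdrift : μ ≠ σ ^ 2 / 2) (hγ : 0 < γ)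
    (hmerton : 0 < μ / (γ * σ ^ 2)) (hmerton1 : μ / (γ * σ ^ 2) < 1)
    (πs : ℝ) (hπs : πs = μ / (γ * σ ^ 2))
    (lam : ℝ → ℝ)
    (hlam : (fun ε : ℝ => lam ε
        - γ * σ ^ 2 * ((3 / (4 * γ)) * πs ^ 2 * (1 - πs) ^ 2) ^ ((1 : ℝ) / 3)
          * ε ^ ((1 : ℝ) / 3))
      =O[nhdsWithin 0 (Set.Ioi 0)] fun ε : ℝ => ε)
    (πm πp R WeT : ℝ → ℝ)
    (hπm : πm = fun ε : ℝ => (μ - lam ε) / (γ * σ ^ 2))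
    (hπp : πp = fun ε : ℝ => (μ + lam ε) / (γ * σ ^ 2))
    (hR : R = fun ε : ℝ => (1 / (1 - ε))
      * ((μ + lam ε) * (γ * σ ^ 2 - μ + lam ε))
      / ((μ - lam ε) * (γ * σ ^ 2 - μ - lam ε)))
    (hWeT : WeT = fun ε : ℝ => (σ ^ 2 / 2) * (2 * μ / σ ^ 2 - 1)
      * (πm ε * (1 - πm ε) / (R ε ^ (2 * μ / σ ^ 2 - 1) - 1)
        - πp ε * (1 - πp ε) / (R ε ^ (1 - 2 * μ / σ ^ 2) - 1))) :
    (fun ε : ℝ => WeT ε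
        - (2 * γ * σ ^ 2 / 3)
          * ((3 / (4 * γ)) * πs ^ 2 * (1 - πs) ^ 2) ^ ((2 : ℝ) / 3)
          * ε ^ (-(1 : ℝ) / 3))
      =O[nhdsWithin 0 (Set.Ioi 0)] fun ε : ℝ => ε ^ ((1 : ℝ) / 3) := by
  subst hπm hπp hR hWeT
  have hs : 0 < γ * σ ^ 2 := by positivity
  have hπ0 : 0 < πs := hπs ▸ hmerton
  have hπ1 : πs < 1 := hπs ▸ hmerton1
  set A := 3 / (4 * γ) * πs ^ 2 * (1 - πs) ^ 2 with hA
  have hA0 : 0 < A := by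
    have : 0 < 1 - πs := by linarith
    positivity
  have hp : 2 * μ / σ ^ 2 - 1 ≠ 0 := by
    rw [sub_ne_zero, Ne, div_eq_one_iff_eq (by positivity)]
    contrapose! hdrift
    linarith
  have hδ : (fun ε => lam ε / (γ * σ ^ 2) - A ^ ((1 : ℝ) / 3) * ε ^ ((1 : ℝ) / 3))
      =O[𝓝[>] 0] fun ε => ε :=
    (hlam.const_mul_left (γ * σ ^ 2)⁻¹).congr_left fun ε => by field_simp
  have hC : 2 * γ * σ ^ 2 / 3 * A ^ ((2 : ℝ) / 3)
      = σ ^ 2 / 2 * ((πs * (1 - πs)) ^ 2 / A ^ ((1 : ℝ) / 3)) := by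
    rw [show (2 : ℝ) / 3 = 1 - 1 / 3 by norm_num, rpow_sub hA0, rpow_one, hA]
    field_simp
    ring
  refine ((isBigO_turnover_widthRatio_sub hπ0 hπ1 (rpow_pos_of_pos hA0 _).ne' hp hδ).const_mul_left
    (σ ^ 2 / 2)).congr_left fun ε => ?_
  beta_reduce
  rw [← widthRatio_div hs.ne', sub_div μ, add_div μ, ← hπs, hC,
    show 1 - 2 * μ / σ ^ 2 = -(2 * μ / σ ^ 2 - 1) by ring]
  ring

/-- Asymptotics of the long-term average wealth turnover:
`WeT(ε) = (2γσ²/3)·((3/(4γ))·π*²·(1-π*)²)^{2/3}·ε^{-1/3} + O(ε^{1/3})`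
as `ε ↓ 0`. -/
theorem wealth_turnover_asymptotics
    (μ σ γ : ℝ) (hμ : 0 < μ) (hσ : 0 < σ) (hdrift : μ ≠ σ ^ 2 / 2) (hγ : 0 < γ)
    (hmerton : 0 < μ / (γ * σ ^ 2)) (hmerton1 : μ / (γ * σ ^ 2) < 1)
    (πs : ℝ) (hπs : πs = μ / (γ * σ ^ 2))
    (ε₀ : ℝ) (hε₀ : 0 < ε₀) (lam : ℝ → ℝ)
    (hmem : ∀ ε ∈ Set.Ioo (0 : ℝ) ε₀, lam ε ∈ Set.Ioo 0 μ)
    (hlev : ∀ ε ∈ Set.Ioo (0 : ℝ) ε₀, μ + lam ε < γ * σ ^ 2)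
    (hlam : (fun ε : ℝ => lam ε
        - γ * σ ^ 2 * ((3 / (4 * γ)) * πs ^ 2 * (1 - πs) ^ 2) ^ ((1 : ℝ) / 3)
          * ε ^ ((1 : ℝ) / 3))
      =O[nhdsWithin 0 (Set.Ioi 0)] fun ε : ℝ => ε)
    (πm πp R WeT : ℝ → ℝ)
    (hπm : πm = fun ε : ℝ => (μ - lam ε) / (γ * σ ^ 2))
    (hπp : πp = fun ε : ℝ => (μ + lam ε) / (γ * σ ^ 2))
    (hR : R = fun ε : ℝ => (1 / (1 - ε))
      * ((μ + lam ε) * (γ * σ ^ 2 - μ + lam ε))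
      / ((μ - lam ε) * (γ * σ ^ 2 - μ - lam ε)))
    (hWeT : WeT = fun ε : ℝ => (σ ^ 2 / 2) * (2 * μ / σ ^ 2 - 1)
      * (πm ε * (1 - πm ε) / (R ε ^ (2 * μ / σ ^ 2 - 1) - 1)
        - πp ε * (1 - πp ε) / (R ε ^ (1 - 2 * μ / σ ^ 2) - 1))) :
    (fun ε : ℝ => WeT ε
        - (2 * γ * σ ^ 2 / 3)
          * ((3 / (4 * γ)) * πs ^ 2 * (1 - πs) ^ 2) ^ ((2 : ℝ) / 3)
          * ε ^ (-(1 : ℝ) / 3))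
      =O[nhdsWithin 0 (Set.Ioi 0)] fun ε : ℝ => ε ^ ((1 : ℝ) / 3) :=
  wealth_turnover_asymptotics_general μ σ γ hσ hdrift hγ hmerton hmerton1 πs hπs lam hlam πm πp R
    WeT hπm hπp hR hWeT
end
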